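/- arXiv:math/0011021 — 3 statements merged into one kernel-verified Lean document; each statement's English description precedes it below -/
import Mathlib

section
/- Let X be a nonempty, connected metric space that is proper (every closed bounded subset is compact), and let P : X → ℝ³ be a local homeomorphism satisfying dist(x, y) ≤ dist(P(x), P(y)) for all x, y ∈ X (P is distance-increasing). Then P is bijective, hence a homeomorphism from X onto ℝ³. -/
/-- A distance-increasing local homeomorphism from a nonempty,
connected, proper metric space to Euclidean 3-space is bijective
(hence a homeomorphism onto `ℝ³`). -/
theorem distance_increasing_localHomeomorph_bijective
    (X : Type*) [MetricSpace X] [Nonempty X] [ConnectedSpace X] [ProperSpace X]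
    (P : X → EuclideanSpace ℝ (Fin 3))
    (hloc : IsLocalHomeomorph P)
    (hdist : ∀ x y : X, dist x y ≤ dist (P x) (P y)) :
    Function.Bijective P := by
  constructor
  · intro x y h
    have := hdist x y
    rw [h, dist_self] at this
    exact dist_le_zero.mp this
  · -- surjective: range is clopen and nonempty in connected ℝ³
    have hopen : IsOpen (Set.range P) := hloc.isOpenMap.isOpen_range
    have hclosed : IsClosed (Set.range P) := by
      apply IsSeqClosed.isClosed
      intro y z hy hz
      choose x hx using hy
      have hz' : Filter.Tendsto (P ∘ x) Filter.atTop (nhds z) := by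
        have : P ∘ x = y := funext hx
        rw [this]; exact hz
      have hcauchy : CauchySeq (P ∘ x) := hz'.cauchySeq
      have hxc : CauchySeq x := by
        rw [Metric.cauchySeq_iff] at hcauchy ⊢
        intro ε hε
        obtain ⟨N, hN⟩ := hcauchy ε hε
        exact ⟨N, fun m hm n hn => lt_of_le_of_lt (hdist _ _) (hN m hm n hn)⟩
      obtain ⟨a, ha⟩ := cauchySeq_tendsto_of_complete hxc
      have : Filter.Tendsto (P ∘ x) Filter.atTop (nhds (P a)) :=
        (hloc.continuous.tendsto a).comp ha
      exact ⟨a, tendsto_nhds_unique this hz'⟩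
    have hne : (Set.range P).Nonempty := Set.range_nonempty P
    have : Set.range P = Set.univ := (IsClopen.eq_univ ⟨hclosed, hopen⟩ hne)
    exact Set.range_eq_univ.mp this
end

section
/- Let Λ be an additive subgroup of ℝ⁴ that is discrete (as a subspace of ℝ⁴) and such that every nonzero element v ∈ Λ is spacelike for the Minkowski form, i.e., Q(v) = v₁² + v₂² + v₃² − v₄² > 0. Then Λ is a free abelian group of rank k for some k ∈ {0, 1, 2, 3}; in particular Λ cannot have rank 4. -/
/-- The Minkowski quadratic form `Q(v) = v₁² + v₂² + v₃² - v₄²` on `ℝ⁴`. -/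
noncomputable def minkQ (v : EuclideanSpace ℝ (Fin 4)) : ℝ :=
  v 0 ^ 2 + v 1 ^ 2 + v 2 ^ 2 - v 3 ^ 2

/-!
A discrete subgroup `Λ` of `ℝ⁴` is a lattice in its real span `V`, hence free of rank
`dim V`, so it suffices to show `V ≠ ℝ⁴`. Every point of `V` is a limit of points `y` with
`n • y ∈ Λ` for some `n > 0`; since `Q(n • y) = n² Q(y)`, continuity of `Q` gives `Q ≥ 0` on `V`.
But `Q(e₄) = -1`, so `V` is a proper subspace.
-/

open Filter Topology Submodule Module

theorem tendsto_floor_mul_div_atTop (c : ℝ) :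
    Tendsto (fun n : ℕ => (⌊n * c⌋ : ℝ) / n) atTop (𝓝 c) := by
  have hlow : Tendsto (fun n : ℕ => c - 1 / (n : ℝ)) atTop (𝓝 c) := by
    simpa using (tendsto_const_nhds (x := c)).sub tendsto_one_div_atTop_nhds_zero_nat
  refine tendsto_of_tendsto_of_tendsto_of_le_of_le' hlow tendsto_const_nhds ?_ ?_
  · filter_upwards [eventually_gt_atTop 0] with n hn
    have hn' : (0 : ℝ) < n := Nat.cast_pos.2 hn
    rw [le_div_iff₀ hn', sub_mul, one_div_mul_cancel hn'.ne']
    linarith [Int.sub_one_lt_floor (n * c)]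
  · filter_upwards [eventually_gt_atTop 0] with n hn
    rw [div_le_iff₀ (Nat.cast_pos.2 hn), mul_comm]
    exact Int.floor_le _

section RealSpan

variable {E : Type*} [AddCommGroup E] [Module ℝ E] [TopologicalSpace E] [ContinuousAdd E]
  [ContinuousSMul ℝ E]

theorem mem_closure_setOf_nsmul_mem_of_mem_span (Λ : AddSubgroup E) {x : E}
    (hx : x ∈ span ℝ (Λ : Set E)) :
    x ∈ closure {y | ∃ n : ℕ, 0 < n ∧ (n : ℝ) • y ∈ Λ} := by
  obtain ⟨m, c, v, rfl⟩ := mem_span_set'.1 hx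
  -- approximate `∑ cᵢ vᵢ` by `∑ (⌊n cᵢ⌋ / n) vᵢ`, which lies in `Λ` after scaling by `n`
  refine mem_closure_of_tendsto (f := fun n : ℕ => ∑ i, ((⌊n * c i⌋ : ℝ) / n) • (v i : E))
    (tendsto_finsetSum _ fun i _ => (tendsto_floor_mul_div_atTop (c i)).smul_const _) ?_
  filter_upwards [eventually_gt_atTop 0] with n hn
  have hn' : (n : ℝ) ≠ 0 := Nat.cast_ne_zero.2 hn.ne'
  refine ⟨n, hn, ?_⟩
  simp_rw [Finset.smul_sum, smul_smul, mul_div_cancel₀ _ hn', Int.cast_smul_eq_zsmul]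
  exact Λ.sum_mem fun i _ => Λ.zsmul_mem (v i).2 _

theorem nonneg_of_mem_span_of_forall_mem_nonneg {f : E → ℝ} (hf : Continuous f)
    (hf_smul : ∀ (c : ℝ) (x : E), f (c • x) = c ^ 2 * f x) {Λ : AddSubgroup E}
    (hΛ : ∀ v ∈ Λ, 0 ≤ f v) {x : E} (hx : x ∈ span ℝ (Λ : Set E)) : 0 ≤ f x := by
  refine closure_minimal ?_ (isClosed_le continuous_const hf)
    (mem_closure_setOf_nsmul_mem_of_mem_span Λ hx)
  rintro y ⟨n, hn, hy⟩
  have hny := hΛ _ hy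
  rw [hf_smul] at hny
  exact nonneg_of_mul_nonneg_right hny (by positivity)

end RealSpan

theorem AddSubgroup.nonempty_addEquiv_fin_finrank_span {E : Type*} [NormedAddCommGroup E]
    [NormedSpace ℝ E] [FiniteDimensional ℝ E] (Λ : AddSubgroup E) [DiscreteTopology Λ] :
    Nonempty (Λ ≃+ (Fin (finrank ℝ (span ℝ (Λ : Set E))) → ℤ)) := by
  let L := Λ.toIntSubmodule
  have : DiscreteTopology L := ‹_›
  have hrank : finrank ℤ L = finrank ℝ (span ℝ (Λ : Set E)) := by
    have := Real.finrank_eq_int_finrank_of_discrete (s := (L : Set E)) (by rwa [span_eq])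
    rw [Set.finrank, Set.finrank, span_eq] at this
    exact this.symm
  exact ⟨(finBasisOfFinrankEq ℤ L hrank).equivFun.toAddEquiv⟩

theorem continuous_minkQ : Continuous minkQ := by
  unfold minkQ
  fun_prop

theorem minkQ_smul (c : ℝ) (v : EuclideanSpace ℝ (Fin 4)) :
    minkQ (c • v) = c ^ 2 * minkQ v := by
  simp only [minkQ, PiLp.smul_apply, smul_eq_mul]
  ring

theorem minkQ_single_three : minkQ (EuclideanSpace.single (3 : Fin 4) (1 : ℝ)) = -1 := by
  simp [minkQ]

theorem span_ne_top_of_forall_minkQ_pos (Λ : AddSubgroup (EuclideanSpace ℝ (Fin 4)))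
    (hspace : ∀ v ∈ Λ, v ≠ 0 → minkQ v > 0) :
    span ℝ (Λ : Set (EuclideanSpace ℝ (Fin 4))) ≠ ⊤ := by
  intro htop
  have hΛ : ∀ v ∈ Λ, 0 ≤ minkQ v := by
    intro v hv
    rcases eq_or_ne v 0 with rfl | hv0
    · simp [minkQ]
    · exact (hspace v hv hv0).le
  have hmem : EuclideanSpace.single (3 : Fin 4) (1 : ℝ) ∈ span ℝ (Λ : Set _) :=
    htop ▸ Submodule.mem_top
  have := nonneg_of_mem_span_of_forall_mem_nonneg continuous_minkQ minkQ_smul hΛ hmem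
  rw [minkQ_single_three] at this
  norm_num at this

/-- A discrete additive subgroup of `ℝ⁴` all of whose nonzero
elements are spacelike for the Minkowski form is free abelian of rank `k ≤ 3`;
in particular it cannot have rank `4`. -/
theorem discrete_spacelike_subgroup_free_rank_le_three
    (Λ : AddSubgroup (EuclideanSpace ℝ (Fin 4)))
    (hdisc : DiscreteTopology Λ)
    (hspace : ∀ v ∈ Λ, v ≠ 0 → minkQ v > 0) :
    ∃ k : ℕ, k ≤ 3 ∧ Nonempty (Λ ≃+ (Fin k → ℤ)) := by
  obtain ⟨e⟩ := Λ.nonempty_addEquiv_fin_finrank_span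
  refine ⟨_, ?_, ⟨e⟩⟩
  have hlt := Submodule.finrank_lt (span_ne_top_of_forall_minkQ_pos Λ hspace)
  rw [finrank_euclideanSpace_fin] at hlt
  omega
end

section
/- Let Λ be a discrete additive subgroup of ℝ⁴ whose ℝ-linear span is all of ℝ⁴ (a full lattice). Then Λ contains a nonzero vector v with Q(v) ≤ 0, where Q(v) = v₁² + v₂² + v₃² − v₄² is the Minkowski form. In other words, a full lattice in Minkowski space must contain a nonzero non-spacelike vector. -/
open Submodule

/-- A full lattice in Minkowski space (a discrete additive subgroup
of `ℝ⁴` whose real span is all of `ℝ⁴`) contains a nonzero non-spacelike vector. -/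
theorem full_lattice_contains_nonspacelike
    (Λ : AddSubgroup (EuclideanSpace ℝ (Fin 4)))
    (hdisc : DiscreteTopology Λ)
    (hfull : Submodule.span ℝ (Λ : Set (EuclideanSpace ℝ (Fin 4))) = ⊤) :
    ∃ v ∈ Λ, v ≠ 0 ∧ minkQ v ≤ 0 := by
  classical

  set L : Submodule ℤ (EuclideanSpace ℝ (Fin 4)) := AddSubgroup.toIntSubmodule Λ with hL
  have hLcoe : (L : Set (EuclideanSpace ℝ (Fin 4))) = (Λ : Set (EuclideanSpace ℝ (Fin 4))) := rfl
  haveI : DiscreteTopology L := hdisc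
  haveI : IsZLattice ℝ L := ⟨by rw [hLcoe]; exact hfull⟩
  haveI := ZLattice.module_free ℝ L
  haveI := ZLattice.module_finite ℝ L
  let b := Module.Free.chooseBasis ℤ L
  let B := b.ofZLatticeBasis ℝ L
  set R : ℝ := ∑ i, ‖B i‖ with hR
  have hR0 : (0:ℝ) ≤ R := Finset.sum_nonneg fun i _ => norm_nonneg _
  -- covering: for each x, there is w ∈ Λ with ‖x - w‖ ≤ R
  have cover : ∀ x : (EuclideanSpace ℝ (Fin 4)), ∃ w ∈ Λ, ‖x - w‖ ≤ R := by
    intro x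
    refine ⟨(ZSpan.floor B x : (EuclideanSpace ℝ (Fin 4))), ?_, ?_⟩
    · have h2 : ∀ z : (EuclideanSpace ℝ (Fin 4)), z ∈ span ℤ (Set.range ⇑B) → z ∈ L := fun z hz => by
        rwa [b.ofZLatticeBasis_span ℝ] at hz
      exact h2 _ (ZSpan.floor B x).2
    · have : x - (ZSpan.floor B x : (EuclideanSpace ℝ (Fin 4))) = ZSpan.fract B x := (ZSpan.fract_apply B x).symm
      rw [this]
      exact ZSpan.norm_fract_le B x
  set t : ℝ := 3 * R + 1 with ht
  set x : (EuclideanSpace ℝ (Fin 4)) := t • (EuclideanSpace.single 3 (1:ℝ)) with hx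
  obtain ⟨w, hwΛ, hw⟩ := cover x
  set d : (EuclideanSpace ℝ (Fin 4)) := w - x with hd
  have hdn : ‖d‖ ≤ R := by rw [hd, ← norm_sub_rev]; exact hw
  have hco : ∀ i, |d i| ≤ R := by
    intro i
    refine le_trans ?_ hdn
    rw [EuclideanSpace.norm_eq, ← Real.sqrt_sq_eq_abs]
    apply Real.sqrt_le_sqrt
    calc d i ^ 2 = ‖d i‖ ^ 2 := by rw [Real.norm_eq_abs, sq_abs]
    _ ≤ ∑ j, ‖d j‖ ^ 2 := Finset.single_le_sum (f := fun j => ‖d j‖ ^ 2) (fun j _ => by positivity) (Finset.mem_univ i)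
  have hw3 : ∀ i, w i = x i + d i := by intro i; simp [hd, PiLp.sub_apply]
  have hx3 : x 3 = t := by simp [hx, PiLp.smul_apply, EuclideanSpace.single_apply]
  have hx0 : x 0 = 0 := by simp [hx, PiLp.smul_apply, EuclideanSpace.single_apply]
  have hx1 : x 1 = 0 := by simp [hx, PiLp.smul_apply, EuclideanSpace.single_apply]
  have hx2 : x 2 = 0 := by simp [hx, PiLp.smul_apply, EuclideanSpace.single_apply]
  have hwne : w ≠ 0 := by
    intro h0
    rw [h0, sub_zero] at hw
    have : ‖x‖ = t := by
      rw [hx, norm_smul, EuclideanSpace.norm_single, norm_one, mul_one,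
        Real.norm_eq_abs, abs_of_pos (by positivity)]
    linarith [hw, this.symm.le]
  refine ⟨w, hwΛ, hwne, ?_⟩
  have h0 := abs_le.mp (hco 0)
  have h1 := abs_le.mp (hco 1)
  have h2 := abs_le.mp (hco 2)
  have h3 := abs_le.mp (hco 3)
  have hq : minkQ w = d 0 ^ 2 + d 1 ^ 2 + d 2 ^ 2 - (t + d 3) ^ 2 := by
    simp only [minkQ, hw3, hx0, hx1, hx2, hx3]; ring
  rw [hq]
  nlinarith [h0.1, h0.2, h1.1, h1.2, h2.1, h2.2, h3.1, h3.2, hR0]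
end
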